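/- The p^x-th cyclotomic polynomial Φ_{p^x}(X) = X^{(p−1)p^{x−1}} + X^{(p−2)p^{x−1}} + ⋯ + X^{p^{x−1}} + 1 is irreducible over ℚ_p for every prime p and x ≥ 1. -/

import Mathlib

/-!
Over `ℤ`, `Φ_{p^x}(X + 1)` is Eisenstein at `p`. Its coefficients stay in `(p)` in any domain, and
its constant term `Φ_{p^x}(1) = p` stays outside `(p)²` as long as `p` is prime there, as it is in
`ℤ_p`. So Eisenstein's criterion and Gauss's lemma over the integrally closed `ℤ_p` give
irreducibility over `ℚ_p`.
-/

open Polynomial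

namespace Polynomial

theorem irreducible_comp_X_add_C_iff {R : Type*} [CommRing R] (f : R[X]) (t : R) :
    Irreducible (f.comp (X + C t)) ↔ Irreducible f := by
  have hshift : algEquivAevalXAddC t f = f.comp (X + C t) := by
    simp [algEquivAevalXAddC, comp_eq_aeval]
  rw [← hshift]
  exact MulEquiv.irreducible_iff _

variable {R : Type*} [CommRing R] [IsDomain R] {p : ℕ} [Fact p.Prime]

theorem cyclotomic_prime_pow_comp_X_add_one_isEisensteinAt_of_prime (hp : Prime (p : R))
    (n : ℕ) :
    ((cyclotomic (p ^ (n + 1)) R).comp (X + 1)).IsEisensteinAt (Ideal.span {(p : R)}) := by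
  have hmonic : ((cyclotomic (p ^ (n + 1)) ℤ).comp (X + 1)).Monic := by
    simpa using (cyclotomic.monic _ ℤ).comp_X_add_C 1
  have hmap : ((cyclotomic (p ^ (n + 1)) ℤ).comp (X + 1)).map (Int.castRingHom R) =
      (cyclotomic (p ^ (n + 1)) R).comp (X + 1) := by
    simp [map_comp, map_cyclotomic]
  have hweak := ((cyclotomic_prime_pow_comp_X_add_one_isEisensteinAt p n).isWeaklyEisensteinAt).map
    (Int.castRingHom R)
  rw [Ideal.submodule_span_eq, Ideal.map_span, Set.image_singleton, map_natCast, hmap] at hweak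
  refine (hmap ▸ hmonic.map _).isEisensteinAt_of_mem_of_notMem
    (Ideal.span_singleton_ne_top hp.not_isUnit) hweak.mem ?_
  rw [coeff_zero_eq_eval_zero, eval_comp, eval_add, eval_X, eval_one, zero_add,
    eval_one_cyclotomic_prime_pow, Ideal.span_singleton_pow, Ideal.mem_span_singleton]
  nth_rw 2 [← pow_one (p : R)]
  rw [pow_dvd_pow_iff hp.ne_zero hp.not_isUnit]
  omega

theorem cyclotomic_prime_pow_irreducible_of_prime (K : Type*) [Field K] [Algebra R K]
    [IsFractionRing R K] [IsIntegrallyClosed R] (hp : Prime (p : R)) (n : ℕ) :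
    Irreducible (cyclotomic (p ^ (n + 1)) K) := by
  have hmonic : ((cyclotomic (p ^ (n + 1)) R).comp (X + 1)).Monic := by
    simpa using (cyclotomic.monic _ R).comp_X_add_C 1
  have hdeg : 0 < ((cyclotomic (p ^ (n + 1)) R).comp (X + 1)).natDegree := by
    rw [natDegree_comp, natDegree_cyclotomic, ← C_1, natDegree_X_add_C, mul_one]
    exact Nat.totient_pos.2 (pow_pos (Fact.out : p.Prime).pos _)
  have hprime : (Ideal.span {(p : R)}).IsPrime := (Ideal.span_singleton_prime hp.ne_zero).2 hp
  have hR := (cyclotomic_prime_pow_comp_X_add_one_isEisensteinAt_of_prime hp n).irreducible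
    hprime hmonic.isPrimitive hdeg
  rw [← irreducible_comp_X_add_C_iff _ 1, C_1, ← map_cyclotomic _ (algebraMap R K)]
  simpa [map_comp] using hmonic.irreducible_iff_irreducible_map_fraction_map.1 hR

end Polynomial

/-- The p^x-th cyclotomic polynomial is irreducible over ℚ_p for every prime p and x ≥ 1. -/
theorem stmt_6 (p x : ℕ) [Fact p.Prime] (hx : 1 ≤ x) :
    Irreducible (Polynomial.cyclotomic (p ^ x) ℚ_[p]) := by
  obtain ⟨n, rfl⟩ := Nat.exists_eq_add_of_le' hx
  exact cyclotomic_prime_pow_irreducible_of_prime (R := ℤ_[p]) ℚ_[p] PadicInt.prime_p n
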